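/- arXiv:2506.05510 — 2 statements merged into one kernel-verified Lean document; each statement's English description precedes it below -/
import Mathlib

section
/- (Dual volume of a simple polytope) Let P = {y ∈ ℝᵈ : U·y + z ≥ 0} be a d-dimensional simple polytope with minimal facet representation, containing 0 in its interior (so z > 0 componentwise). Then the normalized volume of the polar dual satisfies vol(P°) = ∑_{v ∈ V(P)} |det U_v| / ∏_{F ∋ v} z_F, where U_v is the d×d matrix of facet normals of the facets containing vertex v, and the product ranges over facets F containing v. -/
/-!
Every `u ∈ P°` attains its minimum over the compact set `P` at a vertex `v`; since the tight
normals at `v` form a basis, minimality makes `u` a nonnegative combination `∑ lᵢ U_{σ i}` of them,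
and `u ⬝ᵥ v ≥ -1` becomes `∑ lᵢ z_{σ i} ≤ 1`. Hence `P°` is the union over the vertices of the
pyramids `conv (0, U_F / z_F : F ∋ v)`, and conversely each pyramid lies in `P°`. Two pyramids
at `v ≠ w` only meet inside the hyperplane `u ⬝ᵥ v = u ⬝ᵥ w`, and the pyramid at `v` is the image
of the standard simplex, of volume `1 / d!`, under the matrix with rows `U_F / z_F`.
-/

open MeasureTheory Matrix Finset Filter Topology

theorem integral_sub_pow_div_factorial (d : ℕ) (a : ℝ) :
    ∫ t in 0..a, (a - t) ^ d / d.factorial = a ^ (d + 1) / (d + 1).factorial := by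
  rw [intervalIntegral.integral_div, intervalIntegral.integral_comp_sub_left (· ^ d),
    sub_self, sub_zero, integral_pow, Nat.factorial_succ]
  push_cast
  field_simp
  simp

theorem volume_simplex (d : ℕ) {a : ℝ} (ha : 0 ≤ a) :
    volume {x : Fin d → ℝ | 0 ≤ x ∧ ∑ i, x i ≤ a} = ENNReal.ofReal (a ^ d / d.factorial) := by
  induction d generalizing a with
  | zero => simp [ha, volume_pi]
  | succ d ih =>
    set B : Set (ℝ × (Fin d → ℝ)) := {p | 0 ≤ p.1 ∧ 0 ≤ p.2 ∧ p.1 + ∑ i, p.2 i ≤ a}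
    have hB : MeasurableSet B := by measurability
    have hpre : MeasurableEquiv.piFinSuccAbove (fun _ => ℝ) 0 ⁻¹' B =
        {x : Fin (d + 1) → ℝ | 0 ≤ x ∧ ∑ i, x i ≤ a} := by
      ext x
      simp [B, Pi.le_def, Fin.forall_fin_succ, Fin.sum_univ_succ, and_assoc, Fin.tail]
    have hslice (t : ℝ) : volume (Prod.mk t ⁻¹' B) =
        (Set.Icc 0 a).indicator (fun t => ENNReal.ofReal ((a - t) ^ d / d.factorial)) t := by
      by_cases ht : t ∈ Set.Icc 0 a
      · rw [Set.indicator_of_mem ht, ← ih (sub_nonneg.2 ht.2)]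
        congr 1
        ext y
        simp [B, ht.1, le_sub_iff_add_le']
      · rw [Set.indicator_of_notMem ht]
        convert measure_empty (μ := (volume : Measure (Fin d → ℝ)))
        refine Set.eq_empty_of_forall_notMem fun y ⟨ht0, hy0, hsum⟩ => ht ⟨ht0, ?_⟩
        linarith [Finset.sum_nonneg fun i (_ : i ∈ univ) => hy0 i]
    rw [← hpre, (volume_preserving_piFinSuccAbove (fun _ => ℝ) 0).measure_preimage
      hB.nullMeasurableSet, Measure.volume_eq_prod, Measure.prod_apply hB]
    simp_rw [hslice]
    rw [lintegral_indicator measurableSet_Icc, ← ofReal_integral_eq_lintegral_ofReal,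
      integral_Icc_eq_integral_Ioc, ← intervalIntegral.integral_of_le ha,
      integral_sub_pow_div_factorial]
    · exact (by fun_prop : Continuous fun t : ℝ => (a - t) ^ d / d.factorial).integrableOn_Icc
    · filter_upwards [ae_restrict_mem measurableSet_Icc] with t ht
      exact div_nonneg (pow_nonneg (sub_nonneg.2 ht.2) d) (Nat.cast_nonneg _)

theorem IsCompact.exists_mem_extremePoints_isMinOn {E : Type*} [AddCommGroup E] [Module ℝ E]
    [TopologicalSpace E] [T2Space E] [IsTopologicalAddGroup E] [ContinuousSMul ℝ E]
    [LocallyConvexSpace ℝ E] {s : Set E} (hs : IsCompact s) (hne : s.Nonempty) (l : E →L[ℝ] ℝ) :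
    ∃ x ∈ s.extremePoints ℝ, IsMinOn l s x := by
  obtain ⟨y, hy, hmin⟩ := hs.exists_isMinOn hne l.continuous.continuousOn
  have hexp : IsExposed ℝ s {x ∈ s | ∀ z ∈ s, (-l) z ≤ (-l) x} := fun _ => ⟨-l, rfl⟩
  obtain ⟨x, hx⟩ := (hexp.isCompact hs).extremePoints_nonempty
    ⟨y, hy, fun z hz => neg_le_neg (hmin hz)⟩
  exact ⟨x, hexp.isExtreme.extremePoints_subset_extremePoints hx,
    fun z hz => neg_le_neg_iff.1 (hx.1.2 z hz)⟩

theorem volume_dotProduct_eq_zero {ι : Type*} [Fintype ι] [DecidableEq ι] {c : ι → ℝ}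
    (hc : c ≠ 0) : volume {u : ι → ℝ | c ⬝ᵥ u = 0} = 0 :=
  Measure.addHaar_submodule volume (LinearMap.ker (dotProductEquiv ℝ ι c)) <| by
    rwa [Ne, LinearMap.ker_eq_top, LinearEquiv.map_eq_zero_iff]

/-- With rows `M i` the normals of the facets through a vertex and `c i` their heights, this is
`conv (0, M i / c i)`, the cone over the facet of the polar dual corresponding to the vertex. -/
def vertexPyramid {ι : Type*} [Fintype ι] (M : Matrix ι ι ℝ) (c : ι → ℝ) : Set (ι → ℝ) :=
  (· ᵥ* M) '' {l | 0 ≤ l ∧ l ⬝ᵥ c ≤ 1}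

section vertexPyramid

variable {ι : Type*} [Fintype ι] {M : Matrix ι ι ℝ} {c v : ι → ℝ}

theorem vecMul_dotProduct_of_mulVec_eq (hv : M *ᵥ v = -c) (l : ι → ℝ) :
    l ᵥ* M ⬝ᵥ v = -(l ⬝ᵥ c) := by
  rw [← dotProduct_mulVec, hv, dotProduct_neg]

theorem neg_one_le_of_mem_vertexPyramid (hv : M *ᵥ v = -c) {u : ι → ℝ}
    (hu : u ∈ vertexPyramid M c) : -1 ≤ u ⬝ᵥ v := by
  obtain ⟨l, ⟨-, hlc⟩, rfl⟩ := hu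
  rw [vecMul_dotProduct_of_mulVec_eq hv]
  linarith

theorem vecMul_mem_vertexPyramid (hv : M *ᵥ v = -c) {l : ι → ℝ} (hl : 0 ≤ l)
    (hlv : -1 ≤ l ᵥ* M ⬝ᵥ v) : l ᵥ* M ∈ vertexPyramid M c := by
  rw [vecMul_dotProduct_of_mulVec_eq hv] at hlv
  exact ⟨l, ⟨hl, by linarith⟩, rfl⟩

theorem isMinOn_of_mem_vertexPyramid (hv : M *ᵥ v = -c) {u : ι → ℝ}
    (hu : u ∈ vertexPyramid M c) : IsMinOn (u ⬝ᵥ ·) {y | -c ≤ M *ᵥ y} v := by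
  obtain ⟨l, ⟨hl, -⟩, rfl⟩ := hu
  refine fun y (hy : -c ≤ M *ᵥ y) => ?_
  show l ᵥ* M ⬝ᵥ v ≤ l ᵥ* M ⬝ᵥ y
  rw [← dotProduct_mulVec, ← dotProduct_mulVec, hv]
  exact dotProduct_le_dotProduct_of_nonneg_left hy hl

theorem isClosed_vertexPyramid [DecidableEq ι] (hM : M.det ≠ 0) (c : ι → ℝ) :
    IsClosed (vertexPyramid M c) := by
  have hinj : LinearMap.ker M.vecMulLinear = ⊥ :=
    LinearMap.ker_eq_bot.2 (vecMul_injective_iff_isUnit.2 ((isUnit_iff_isUnit_det M).2 hM.isUnit))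
  refine (LinearMap.isClosedEmbedding_of_injective hinj).isClosedMap _ ?_
  exact (isClosed_le continuous_const continuous_id).inter
    (isClosed_le (continuous_id.dotProduct continuous_const) continuous_const)

theorem volume_vertexPyramid {d : ℕ} (M : Matrix (Fin d) (Fin d) ℝ) {c : Fin d → ℝ}
    (hc : ∀ i, 0 < c i) :
    volume (vertexPyramid M c) = ENNReal.ofReal (|M.det| / (d.factorial * ∏ i, c i)) := by
  have hsimplex : {l : Fin d → ℝ | 0 ≤ l ∧ l ⬝ᵥ c ≤ 1} =
      (· ᵥ* diagonal c⁻¹) '' {x | 0 ≤ x ∧ ∑ i, x i ≤ 1} := by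
    ext l
    refine ⟨fun ⟨hl, hlc⟩ => ⟨l * c, ⟨?_, ?_⟩, ?_⟩, ?_⟩
    · exact fun i => mul_nonneg (hl i) (hc i).le
    · simpa [dotProduct, mul_comm] using hlc
    · ext i
      simp [vecMul_diagonal, (hc i).ne']
    · rintro ⟨x, ⟨hx, hxs⟩, rfl⟩
      refine ⟨fun i => ?_, ?_⟩
      · simpa [vecMul_diagonal] using mul_nonneg (hx i) (inv_nonneg.2 (hc i).le)
      · simpa [vecMul_diagonal, dotProduct, (hc _).ne'] using hxs
  rw [vertexPyramid, hsimplex, Set.image_image]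
  simp_rw [vecMul_vecMul]
  rw [← coe_vecMulLinear, Measure.addHaar_image_linearMap, volume_simplex d zero_le_one,
    ← mulVecLin_transpose, ← toLin'_apply', LinearMap.det_toLin', det_transpose, det_mul,
    det_diagonal, ← ENNReal.ofReal_mul (abs_nonneg _)]
  congr 1
  simp only [Pi.inv_apply, prod_inv_distrib, one_pow, abs_mul, abs_inv,
    abs_of_pos (prod_pos fun i _ => hc i)]
  field_simp

end vertexPyramid

def polyhedron {ι κ : Type*} [Fintype ι] (U : κ → ι → ℝ) (z : κ → ℝ) : Set (ι → ℝ) :=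
  {y | ∀ j, 0 ≤ U j ⬝ᵥ y + z j}

namespace polyhedron

variable {ι κ : Type*} [Fintype ι] {U : κ → ι → ℝ} {z : κ → ℝ} {v : ι → ℝ}

theorem isClosed : IsClosed (polyhedron U z) := by
  simp only [polyhedron, Set.ofPred_forall]
  exact isClosed_iInter fun j =>
    isClosed_le continuous_const ((continuous_const.dotProduct continuous_id).add continuous_const)

theorem eventually_add_smul_mem [Finite κ] (hv : v ∈ polyhedron U z) {w : ι → ℝ}
    (hw : ∀ j, U j ⬝ᵥ v + z j = 0 → 0 ≤ U j ⬝ᵥ w) :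
    ∀ᶠ t in 𝓝[>] (0 : ℝ), v + t • w ∈ polyhedron U z := by
  refine eventually_all.2 fun j => ?_
  have hlin (t : ℝ) : U j ⬝ᵥ (v + t • w) + z j = U j ⬝ᵥ v + z j + t * (U j ⬝ᵥ w) := by
    rw [dotProduct_add, dotProduct_smul, smul_eq_mul]
    ring
  simp only [hlin]
  rcases (hv j).eq_or_lt with hact | hinact
  · filter_upwards [self_mem_nhdsWithin] with t (ht : 0 < t)
    rw [← hact, zero_add]
    exact mul_nonneg ht.le (hw j hact.symm)
  · have hcont : Continuous fun t : ℝ => U j ⬝ᵥ v + z j + t * (U j ⬝ᵥ w) := by fun_prop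
    filter_upwards [nhdsWithin_le_nhds
      ((hcont.tendsto' 0 _ (by simp)).eventually_const_lt hinact)] with t ht using ht.le

theorem pos_of_zero_mem_interior (h0 : 0 ∈ interior (polyhedron U z)) {j : κ} (hj : U j ≠ 0) :
    0 < z j := by
  have hlim : Tendsto (fun t : ℝ => -(t • U j)) (𝓝[>] 0) (𝓝 0) :=
    tendsto_nhdsWithin_of_tendsto_nhds
      ((continuous_id.smul continuous_const).neg.tendsto' 0 0 (by simp))
  obtain ⟨t, hmem, ht : 0 < t⟩ :=
    ((hlim.eventually (mem_interior_iff_mem_nhds.1 h0)).and self_mem_nhdsWithin).exists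
  have hz := hmem j
  rw [dotProduct_neg, dotProduct_smul, smul_eq_mul] at hz
  nlinarith [show 0 < U j ⬝ᵥ U j by simpa using dotProduct_self_star_pos_iff.2 hj]

variable {σ : ι → κ}

theorem mulVec_le_of_mem (σ : ι → κ) {y : ι → ℝ} (hy : y ∈ polyhedron U z) :
    -(z ∘ σ) ≤ (of fun i => U (σ i)) *ᵥ y :=
  fun i => neg_le_iff_add_nonneg.2 (hy (σ i))

theorem mulVec_eq_of_active (hact : ∀ i, U (σ i) ⬝ᵥ v + z (σ i) = 0) :
    (of fun i => U (σ i)) *ᵥ v = -(z ∘ σ) :=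
  funext fun i => eq_neg_of_add_eq_zero_left (hact i)

theorem det_ne_zero_of_mem_extremePoints [Finite κ] [DecidableEq ι]
    (hv : v ∈ (polyhedron U z).extremePoints ℝ)
    (hcover : ∀ j, U j ⬝ᵥ v + z j = 0 → j ∈ Set.range σ) :
    (of fun i => U (σ i)).det ≠ 0 := by
  intro hdet
  obtain ⟨w, hw0, hw⟩ := exists_mulVec_eq_zero_iff.2 hdet
  have hwact (j) (hj : U j ⬝ᵥ v + z j = 0) : U j ⬝ᵥ w = 0 := by
    obtain ⟨i, rfl⟩ := hcover j hj
    exact congr_fun hw i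
  obtain ⟨t, ⟨hplus, hminus⟩, ht : 0 < t⟩ :=
    (((eventually_add_smul_mem hv.1 fun j hj => (hwact j hj).ge).and
      (eventually_add_smul_mem hv.1 (w := -w) fun j hj => by
        rw [dotProduct_neg, hwact j hj, neg_zero])).and self_mem_nhdsWithin).exists
  have hmid : v ∈ openSegment ℝ (v + t • w) (v + t • -w) :=
    ⟨1 / 2, 1 / 2, by norm_num, by norm_num, by norm_num, by module⟩
  have htw : t • w = 0 := add_eq_left.1 (hv.2 hplus hminus hmid)
  exact hw0 ((smul_eq_zero.1 htw).resolve_left ht.ne')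

theorem pos_of_mem_extremePoints [Finite κ] [DecidableEq ι]
    (h0 : 0 ∈ interior (polyhedron U z)) (hv : v ∈ (polyhedron U z).extremePoints ℝ)
    (hcover : ∀ j, U j ⬝ᵥ v + z j = 0 → j ∈ Set.range σ) (i : ι) : 0 < z (σ i) :=
  pos_of_zero_mem_interior h0 fun hrow => det_ne_zero_of_mem_extremePoints hv hcover
    (det_eq_zero_of_row_eq_zero i fun j => congr_fun hrow j)

theorem exists_nonneg_vecMul_eq_of_isMinOn [Finite κ] [DecidableEq ι]
    (hv : v ∈ polyhedron U z) (hcover : ∀ j, U j ⬝ᵥ v + z j = 0 → j ∈ Set.range σ)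
    (hdet : (of fun i => U (σ i)).det ≠ 0) {u : ι → ℝ}
    (hmin : IsMinOn (u ⬝ᵥ ·) (polyhedron U z) v) :
    ∃ l, 0 ≤ l ∧ l ᵥ* of (fun i => U (σ i)) = u := by
  set M := of fun i => U (σ i)
  refine ⟨u ᵥ* M⁻¹, fun i => ?_, by rw [vecMul_vecMul, nonsing_inv_mul M hdet.isUnit, vecMul_one]⟩
  rw [Pi.zero_apply]
  by_contra! hneg
  -- along `w` only the `i`-th tight constraint becomes slack, and `u` decreases at rate `l i`
  set w := M⁻¹ *ᵥ Pi.single i 1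
  have hMw : M *ᵥ w = Pi.single i 1 := by
    rw [mulVec_mulVec, mul_nonsing_inv M hdet.isUnit, one_mulVec]
  have hw (j) (hj : U j ⬝ᵥ v + z j = 0) : 0 ≤ U j ⬝ᵥ w := by
    obtain ⟨k, rfl⟩ := hcover j hj
    rw [show U (σ k) ⬝ᵥ w = (M *ᵥ w) k from rfl, hMw]
    exact (Pi.single_nonneg (α := fun _ : ι => ℝ)).2 zero_le_one k
  obtain ⟨t, hmem, ht : 0 < t⟩ := ((eventually_add_smul_mem hv hw).and self_mem_nhdsWithin).exists
  have huw : u ⬝ᵥ w = (u ᵥ* M⁻¹) i := by rw [dotProduct_mulVec, dotProduct_single, mul_one]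
  have hle : u ⬝ᵥ v ≤ u ⬝ᵥ (v + t • w) := hmin hmem
  rw [dotProduct_add, dotProduct_smul, smul_eq_mul, huw] at hle
  nlinarith

theorem isMinOn_of_mem_vertexPyramid (hact : ∀ i, U (σ i) ⬝ᵥ v + z (σ i) = 0) {u : ι → ℝ}
    (hu : u ∈ vertexPyramid (of fun i => U (σ i)) (z ∘ σ)) :
    IsMinOn (u ⬝ᵥ ·) (polyhedron U z) v :=
  (_root_.isMinOn_of_mem_vertexPyramid (mulVec_eq_of_active hact) hu).on_subset
    fun _ => mulVec_le_of_mem σ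

theorem vertexPyramid_subset_polar (hact : ∀ i, U (σ i) ⬝ᵥ v + z (σ i) = 0) :
    vertexPyramid (of fun i => U (σ i)) (z ∘ σ) ⊆ {u | ∀ y ∈ polyhedron U z, -1 ≤ u ⬝ᵥ y} :=
  fun _ hu _ hy => (neg_one_le_of_mem_vertexPyramid (mulVec_eq_of_active hact) hu).trans
    (isMinOn_of_mem_vertexPyramid hact hu hy)

theorem aedisjoint_vertexPyramid [DecidableEq ι] {w : ι → ℝ} {τ : ι → κ}
    (hv : v ∈ polyhedron U z) (hw : w ∈ polyhedron U z) (hvw : v ≠ w)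
    (hσ : ∀ i, U (σ i) ⬝ᵥ v + z (σ i) = 0) (hτ : ∀ i, U (τ i) ⬝ᵥ w + z (τ i) = 0) :
    AEDisjoint volume (vertexPyramid (of fun i => U (σ i)) (z ∘ σ))
      (vertexPyramid (of fun i => U (τ i)) (z ∘ τ)) := by
  refine measure_mono_null (fun u ⟨huσ, huτ⟩ => ?_)
    (volume_dotProduct_eq_zero (sub_ne_zero.2 hvw))
  have h1 : u ⬝ᵥ v ≤ u ⬝ᵥ w := isMinOn_of_mem_vertexPyramid hσ huσ hw
  have h2 : u ⬝ᵥ w ≤ u ⬝ᵥ v := isMinOn_of_mem_vertexPyramid hτ huτ hv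
  show (v - w) ⬝ᵥ u = 0
  rw [dotProduct_comm, dotProduct_sub]
  linarith

theorem polar_eq_iUnion_vertexPyramid [Finite κ] [DecidableEq ι]
    (hcompact : IsCompact (polyhedron U z)) (hne : (polyhedron U z).Nonempty)
    {V : Finset (ι → ℝ)} (hV : (V : Set (ι → ℝ)) = (polyhedron U z).extremePoints ℝ)
    (σ : V → ι → κ) (hact : ∀ v : V, ∀ i, U (σ v i) ⬝ᵥ v + z (σ v i) = 0)
    (hcover : ∀ v : V, ∀ j, U j ⬝ᵥ v + z j = 0 → j ∈ Set.range (σ v)) :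
    {u | ∀ y ∈ polyhedron U z, -1 ≤ u ⬝ᵥ y} =
      ⋃ v ∈ V.attach, vertexPyramid (of fun i => U (σ v i)) (z ∘ σ v) := by
  refine subset_antisymm (fun u hu => ?_)
    (Set.iUnion₂_subset fun v _ => vertexPyramid_subset_polar (hact v))
  obtain ⟨v, hvext, hmin⟩ :=
    hcompact.exists_mem_extremePoints_isMinOn hne (dotProductBilin ℝ ℝ u).toContinuousLinearMap
  have hvV : v ∈ V := by rwa [← Finset.mem_coe, hV]
  obtain ⟨l, hl, rfl⟩ := exists_nonneg_vecMul_eq_of_isMinOn hvext.1 (hcover ⟨v, hvV⟩)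
    (det_ne_zero_of_mem_extremePoints hvext (hcover ⟨v, hvV⟩)) hmin
  exact Set.mem_biUnion (V.mem_attach ⟨v, hvV⟩)
    (vecMul_mem_vertexPyramid (mulVec_eq_of_active (hact ⟨v, hvV⟩)) hl (hu v hvext.1))

end polyhedron

theorem polyhedron.volume_polar {d : ℕ} {κ : Type*} [Finite κ] {U : κ → Fin d → ℝ} {z : κ → ℝ}
    (hbdd : Bornology.IsBounded (polyhedron U z)) (h0 : 0 ∈ interior (polyhedron U z))
    {V : Finset (Fin d → ℝ)} (hV : (V : Set (Fin d → ℝ)) = (polyhedron U z).extremePoints ℝ)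
    (σ : V → Fin d → κ) (hact : ∀ v : V, ∀ i, U (σ v i) ⬝ᵥ v + z (σ v i) = 0)
    (hcover : ∀ v : V, ∀ j, U j ⬝ᵥ v + z j = 0 → j ∈ Set.range (σ v)) :
    volume {u | ∀ y ∈ polyhedron U z, -1 ≤ u ⬝ᵥ y} = ∑ v ∈ V.attach,
      ENNReal.ofReal (|(of fun i => U (σ v i)).det| / (d.factorial * ∏ i, z (σ v i))) := by
  have hext (v : V) : v.1 ∈ (polyhedron U z).extremePoints ℝ := hV ▸ v.2
  rw [polar_eq_iUnion_vertexPyramid (Metric.isCompact_of_isClosed_isBounded isClosed hbdd)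
      ⟨0, interior_subset h0⟩ hV σ hact hcover,
    measure_biUnion_finset₀
      (fun v _ w _ hvw => aedisjoint_vertexPyramid (hext v).1 (hext w).1
        (Subtype.coe_injective.ne hvw) (hact v) (hact w))
      fun v _ => (isClosed_vertexPyramid
        (det_ne_zero_of_mem_extremePoints (hext v) (hcover v)) _).measurableSet.nullMeasurableSet]
  exact sum_congr rfl fun v _ =>
    volume_vertexPyramid _ (pos_of_mem_extremePoints (σ := σ v) h0 (hext v) (hcover v))

theorem stmt_10_general (d n : ℕ)
    (U : Fin n → Fin d → ℝ) (z : Fin n → ℝ)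
    (P : Set (Fin d → ℝ))
    (hP : P = {y : Fin d → ℝ | ∀ i : Fin n, 0 ≤ U i ⬝ᵥ y + z i})
    (hbdd : Bornology.IsBounded P)
    (h0 : (0 : Fin d → ℝ) ∈ interior P)
    -- V is the vertex set of P
    (V : Finset (Fin d → ℝ)) (hV : (V : Set (Fin d → ℝ)) = Set.extremePoints ℝ P)
    -- S v is the set of facets containing v
    (S : (Fin d → ℝ) → Finset (Fin n))
    (hS : ∀ v : Fin d → ℝ, S v = Finset.univ.filter fun i => U i ⬝ᵥ v + z i = 0)
    -- an enumeration of the facets through each vertex (|det U_v| does not depend on it)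
    (e : ∀ v ∈ V, (S v : Finset (Fin n)) ≃ Fin d) :
    (d.factorial : ℝ) *
        (volume {u : Fin d → ℝ | ∀ y ∈ P, -1 ≤ u ⬝ᵥ y}).toReal
      = ∑ v ∈ V.attach,
          |Matrix.det (Matrix.of fun i j : Fin d => U ((e v.1 v.2).symm i : S v.1) j)| /
            ∏ i ∈ S v.1, z i := by
  obtain rfl : P = polyhedron U z := hP
  set σ : V → Fin d → Fin n := fun v i => (e v.1 v.2).symm i
  have hact (v : V) (i) : U (σ v i) ⬝ᵥ v + z (σ v i) = 0 := by
    simpa [hS] using ((e v.1 v.2).symm i).2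
  have hcover (v : V) (j) (hj : U j ⬝ᵥ v + z j = 0) : j ∈ Set.range (σ v) :=
    ⟨e v.1 v.2 ⟨j, by simp [hS, hj]⟩, by simp [σ]⟩
  rw [polyhedron.volume_polar hbdd h0 hV σ hact hcover,
    ENNReal.toReal_sum fun _ _ => ENNReal.ofReal_ne_top, mul_sum]
  refine sum_congr rfl fun v _ => ?_
  have hz := polyhedron.pos_of_mem_extremePoints h0 (hV ▸ v.2) (hcover v)
  have hprod : ∏ i, z (σ v i) = ∏ i ∈ S v.1, z i :=
    (Equiv.prod_comp (e v.1 v.2).symm (fun j => z j)).trans (prod_coe_sort (S v.1) z)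
  have hpos : 0 < ∏ i, z (σ v i) := prod_pos fun i _ => hz i
  rw [ENNReal.toReal_ofReal (by positivity), ← hprod]
  field_simp
  rfl

/-- Dual volume of a simple polytope: if P = {y : U·y + z ≥ 0} is a bounded
full-dimensional simple polytope with minimal (irredundant) facet representation and
0 ∈ int(P), then the normalized volume of the polar dual P° satisfies
vol(P°) = ∑_{v ∈ V(P)} |det U_v| / ∏_{F ∋ v} z_F. -/
theorem stmt_10 (d n : ℕ) (hd : 0 < d)
    (U : Fin n → Fin d → ℝ) (z : Fin n → ℝ)
    (P : Set (Fin d → ℝ))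
    (hP : P = {y : Fin d → ℝ | ∀ i : Fin n, 0 ≤ U i ⬝ᵥ y + z i})
    (hbdd : Bornology.IsBounded P)
    (h0 : (0 : Fin d → ℝ) ∈ interior P)
    -- minimality: each inequality defines a facet (has a point where only it is tight)
    (hmin : ∀ i : Fin n, ∃ y ∈ P, U i ⬝ᵥ y + z i = 0 ∧ ∀ j : Fin n, j ≠ i → 0 < U j ⬝ᵥ y + z j)
    -- V is the vertex set of P
    (V : Finset (Fin d → ℝ)) (hV : (V : Set (Fin d → ℝ)) = Set.extremePoints ℝ P)
    -- S v is the set of facets containing v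
    (S : (Fin d → ℝ) → Finset (Fin n))
    (hS : ∀ v : Fin d → ℝ, S v = Finset.univ.filter fun i => U i ⬝ᵥ v + z i = 0)
    -- P is simple
    (hsimple : ∀ v ∈ V, (S v).card = d)
    -- an enumeration of the facets through each vertex (|det U_v| does not depend on it)
    (e : ∀ v ∈ V, (S v : Finset (Fin n)) ≃ Fin d) :
    (d.factorial : ℝ) *
        (volume {u : Fin d → ℝ | ∀ y ∈ P, -1 ≤ u ⬝ᵥ y}).toReal
      = ∑ v ∈ V.attach,
          |Matrix.det (Matrix.of fun i j : Fin d => U ((e v.1 v.2).symm i : S v.1) j)| /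
            ∏ i ∈ S v.1, z i :=
  stmt_10_general d n U z P hP hbdd h0 V hV S hS e
end

section
/- (Triangulation property for a pyramid) Let P be the pyramid with vertices (0,0,1), (1,1,0), (-1,1,0), (-1,-1,0), (1,-1,0), subdivided into two tetrahedra Δ₁ (vertices (0,0,1),(1,1,0),(-1,1,0),(-1,-1,0)) and Δ₂ (vertices (0,0,1),(1,1,0),(-1,-1,0),(1,-1,0)). Then the dual volume function of P equals the sum of the dual volume functions of Δ₁ and Δ₂: for y in the interior of P, vol((P-y)°) = vol((Δ₁-y)°) + vol((Δ₂-y)°) wherever all three are defined, as an identity of rational functions. -/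
/-!
The plane `u₁ = 0` cuts the polar `(P - y)°` into two tetrahedra: on `u₁ ≤ 0` the constraints of
the vertices `(±1, -1, 0)` are implied by those of `(±1, 1, 0)`. Such a tetrahedron is the
preimage of the standard corner simplex under the affine map of its normalised facet slacks, so
its volume is `1 / (3! |det|)`; the half `u₁ ≥ 0` is the half `u₁ ≤ 0` for the mirrored point,
as `P` is symmetric under `x₁ ↦ -x₁`. The two volumes add up to the same rational function as
the canonical forms of `Δ₁` and `Δ₂`, whose spurious poles along `y₀ = y₁` cancel.
-/

open MeasureTheory Matrix Set
open scoped Pointwise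

def polarAt {n : ℕ} (s : Set (Fin n → ℝ)) (y : Fin n → ℝ) : Set (Fin n → ℝ) :=
  {u | ∀ p ∈ s, -1 ≤ u ⬝ᵥ (p - y)}

theorem polarAt_convexHull {n : ℕ} (s : Set (Fin n → ℝ)) (y : Fin n → ℝ) :
    polarAt (convexHull ℝ s) y = polarAt s y := by
  ext u
  refine ⟨fun h p hp => h p (subset_convexHull ℝ s hp), fun h p hp => ?_⟩
  have hconv : Convex ℝ {p | -1 ≤ u ⬝ᵥ (p - y)} := by
    simp_rw [dotProduct_sub, le_sub_iff_add_le]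
    exact convex_halfSpace_ge (dotProductBilin ℝ ℝ u).isLinear _
  exact convexHull_min h hconv hp

theorem dotProduct_lt_of_mem_interior_convexHull {n : ℕ} {s : Set (Fin n → ℝ)} {w : Fin n → ℝ}
    (hw : w ≠ 0) {r : ℝ} (hs : ∀ p ∈ s, w ⬝ᵥ p ≤ r) {x : Fin n → ℝ}
    (hx : x ∈ interior (convexHull ℝ s)) : w ⬝ᵥ x < r := by
  let f : StrongDual ℝ (Fin n → ℝ) := LinearMap.toContinuousLinearMap (dotProductBilin ℝ ℝ w)
  have hf : f ≠ 0 := fun h => hw (dotProduct_self_eq_zero.1 (congrArg (· w) h))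
  have hsub : convexHull ℝ s ⊆ f ⁻¹' Iic r :=
    convexHull_min hs ((convex_Iic r).linear_preimage f.toLinearMap)
  have himage : f '' interior (convexHull ℝ s) ⊆ Iio r := by
    rw [← interior_Iic]
    exact interior_maximal (image_subset_iff.2 (interior_subset.trans hsub))
      (f.isOpenMap_of_ne_zero hf _ isOpen_interior)
  exact himage (mem_image_of_mem f hx)

theorem isClosed_polarAt {n : ℕ} (s : Set (Fin n → ℝ)) (y : Fin n → ℝ) :
    IsClosed (polarAt s y) := by
  simp only [polarAt, ofPred_forall]
  exact isClosed_biInter fun p _ => isClosed_le continuous_const (by fun_prop)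

theorem volume_preimage_mulVec {n : ℕ} {M : Matrix (Fin n) (Fin n) ℝ} (hM : M.det ≠ 0)
    (s : Set (Fin n → ℝ)) :
    volume ((M *ᵥ ·) ⁻¹' s) = ENNReal.ofReal |M.det⁻¹| * volume s := by
  rw [← LinearMap.det_toLin'] at hM ⊢
  exact Measure.addHaar_preimage_linearMap volume hM s

def cornerSimplex (n : ℕ) : Set (Fin n → ℝ) := {x | (∀ i, 0 ≤ x i) ∧ ∑ i, x i ≤ 1}

theorem smul_cornerSimplex {n : ℕ} {r : ℝ} (hr : 0 < r) :
    r • cornerSimplex n = {x | (∀ i, 0 ≤ x i) ∧ ∑ i, x i ≤ r} := by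
  ext x
  simp only [mem_smul_set_iff_inv_smul_mem₀ hr.ne', cornerSimplex, mem_ofPred_eq, Pi.smul_apply,
    smul_eq_mul, ← Finset.mul_sum, inv_mul_le_iff₀ hr, mul_one]
  simp [hr]

theorem integral_one_sub_pow (n : ℕ) : ∫ t in Ico (0 : ℝ) 1, (1 - t) ^ n = 1 / (n + 1) := by
  rw [integral_Ico_eq_integral_Ioo, ← integral_Ioc_eq_integral_Ioo,
    ← intervalIntegral.integral_of_le zero_le_one,
    intervalIntegral.integral_comp_sub_left (fun t => t ^ n)]
  simp

theorem volume_cornerSimplex (n : ℕ) :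
    volume (cornerSimplex n) = ENNReal.ofReal (1 / n.factorial) := by
  induction n with
  | zero => simp [cornerSimplex, volume_pi]
  | succ n ih =>
    set C : Set (ℝ × (Fin n → ℝ)) := {p | 0 ≤ p.1 ∧ (∀ i, 0 ≤ p.2 i) ∧ p.1 + ∑ i, p.2 i ≤ 1}
    have hC : MeasurableSet C := by measurability
    have he := volume_preserving_piFinSuccAbove (fun _ : Fin (n + 1) => ℝ) 0
    have hpre : cornerSimplex (n + 1) = MeasurableEquiv.piFinSuccAbove _ 0 ⁻¹' C := by
      ext x
      simp [cornerSimplex, C, Fin.forall_fin_succ, Fin.sum_univ_succ,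
        MeasurableEquiv.piFinSuccAbove, Fin.tail, and_assoc]
    have hslice : (fun t => volume (Prod.mk t ⁻¹' C)) =ᵐ[volume]
        (Ico 0 1).indicator (fun t => ENNReal.ofReal ((1 - t) ^ n) * volume (cornerSimplex n)) := by
      -- at `t = 1` the slice is not a positive dilate of the simplex, but a single `t` is null
      filter_upwards [measure_eq_zero_iff_ae_notMem.1 (Real.volume_singleton (a := 1))] with t ht
      by_cases htI : t ∈ Ico 0 1
      · have hscaled : Prod.mk t ⁻¹' C = (1 - t) • cornerSimplex n := by
          rw [smul_cornerSimplex (by linarith [htI.2])]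
          ext x
          simp only [C, mem_preimage, mem_ofPred_eq, htI.1, true_and]
          constructor <;> rintro ⟨h0, h1⟩ <;> exact ⟨h0, by linarith⟩
        rw [indicator_of_mem htI, hscaled, Measure.addHaar_smul, Module.finrank_fin_fun, abs_pow,
          abs_of_pos (by linarith [htI.2])]
      · rw [indicator_of_notMem htI]
        convert measure_empty (μ := (volume : Measure (Fin n → ℝ)))
        refine eq_empty_of_forall_notMem fun x ⟨h0, hx, hsum⟩ => htI ⟨h0, ?_⟩
        have := Finset.sum_nonneg fun i (_ : i ∈ Finset.univ) => hx i
        exact lt_of_le_of_ne (by linarith) ht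
    rw [hpre, he.measure_preimage_equiv, Measure.volume_eq_prod, Measure.prod_apply hC,
      lintegral_congr_ae hslice, lintegral_indicator measurableSet_Ico, ih,
      lintegral_mul_const' _ _ ENNReal.ofReal_ne_top, ← ofReal_integral_eq_lintegral_ofReal,
      integral_one_sub_pow]
    · rw [← ENNReal.ofReal_mul (by positivity), Nat.factorial_succ, Nat.cast_mul, Nat.cast_succ,
        one_div_mul_one_div]
    · exact ((continuous_const.sub continuous_id).pow n).integrableOn_Icc.mono_set
        Ico_subset_Icc_self
    · filter_upwards [ae_restrict_mem measurableSet_Ico] with t ht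
      exact pow_nonneg (by linarith [ht.2]) n

theorem vecCons_mem_cornerSimplex_three {x₀ x₁ x₂ : ℝ} :
    ![x₀, x₁, x₂] ∈ cornerSimplex 3 ↔ 0 ≤ x₀ ∧ 0 ≤ x₁ ∧ 0 ≤ x₂ ∧ x₀ + x₁ + x₂ ≤ 1 := by
  simp [cornerSimplex, Fin.forall_fin_succ, Fin.sum_univ_three, and_assoc]

def pyramidVertices : Set (Fin 3 → ℝ) :=
  {![0, 0, 1], ![1, 1, 0], ![-1, 1, 0], ![-1, -1, 0], ![1, -1, 0]}

theorem pyramid_facets_pos_of_mem_interior {y : Fin 3 → ℝ}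
    (hy : y ∈ interior (convexHull ℝ pyramidVertices)) :
    0 < y 2 ∧ 0 < 1 - y 0 - y 2 ∧ 0 < 1 + y 0 - y 2 ∧ 0 < 1 - y 1 - y 2 ∧ 0 < 1 + y 1 - y 2 := by
  have facet := fun (w : Fin 3 → ℝ) (r : ℝ) (hw : w ≠ 0)
      (hs : ∀ p ∈ pyramidVertices, w ⬝ᵥ p ≤ r) => dotProduct_lt_of_mem_interior_convexHull hw hs hy
  have h2 := facet ![0, 0, -1] 0 (by simp) (by simp [pyramidVertices])
  have h02 := facet ![1, 0, 1] 1 (by simp) (by simp [pyramidVertices])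
  have h02' := facet ![-1, 0, 1] 1 (by simp) (by simp [pyramidVertices])
  have h12 := facet ![0, 1, 1] 1 (by simp) (by simp [pyramidVertices])
  have h12' := facet ![0, -1, 1] 1 (by simp) (by simp [pyramidVertices])
  simp only [dotProduct, Fin.sum_univ_three, cons_val_zero, cons_val_one, cons_val_two,
    head_cons, tail_cons] at h2 h02 h02' h12 h12'
  refine ⟨?_, ?_, ?_, ?_, ?_⟩ <;> linarith

theorem mem_polarAt_pyramidVertices_inter_nonpos {y u : Fin 3 → ℝ} :
    u ∈ polarAt pyramidVertices y ∩ {u | u 1 ≤ 0} ↔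
      0 ≤ 1 + u ⬝ᵥ (![-1, 1, 0] - y) ∧ 0 ≤ 1 + u ⬝ᵥ (![1, 1, 0] - y) ∧ 0 ≤ -u 1 ∧
        0 ≤ 1 + u ⬝ᵥ (![0, 0, 1] - y) := by
  -- the slack of `(±1, -1, 0)` is the slack of `(±1, 1, 0)` minus `2 u₁`
  simp only [polarAt, pyramidVertices, mem_inter_iff, mem_ofPred_eq, forall_mem_insert,
    mem_singleton_iff, forall_eq, dotProduct, Fin.sum_univ_three, Pi.sub_apply, cons_val_zero,
    cons_val_one, cons_val_two, head_cons, tail_cons]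
  constructor
  · rintro ⟨⟨hA, hp, hm, -, -⟩, hu⟩
    refine ⟨?_, ?_, ?_, ?_⟩ <;> linarith
  · rintro ⟨hm, hp, hu, hA⟩
    refine ⟨⟨?_, ?_, ?_, ?_, ?_⟩, ?_⟩ <;> linarith

theorem volume_polarAt_pyramidVertices_inter_nonpos {y : Fin 3 → ℝ} (h2 : 0 < y 2)
    (h02 : 0 < 1 - y 0 - y 2) (h02' : 0 < 1 + y 0 - y 2) (h12 : 0 < 1 - y 1 - y 2) :
    volume (polarAt pyramidVertices y ∩ {u | u 1 ≤ 0}) =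
      ENNReal.ofReal (1 / (3 * (y 2 * (1 - y 0 - y 2) * (1 + y 0 - y 2) * (1 - y 1 - y 2)))) := by
  set a := 1 - y 0 - y 2 with ha
  set b := 1 + y 0 - y 2 with hb
  set g := 1 - y 1 - y 2 with hg
  -- barycentric coordinates of the tetrahedron: facet slacks, each scaled to be `1` at the
  -- opposite vertex; by `hsum` the fourth one is `y₂` times the apex slack
  let M : Matrix (Fin 3) (Fin 3) ℝ :=
    Matrix.of ![(a / 2) • (![-1, 1, 0] - y), (b / 2) • (![1, 1, 0] - y), ![0, -g, 0]]
  let c : Fin 3 → ℝ := ![a / 2, b / 2, 0]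
  have hdet : M.det = a * b * g * y 2 / 2 := by
    simp only [M, det_fin_three, of_apply, smul_eq_mul, Pi.smul_apply, Pi.sub_apply, cons_val_zero,
      cons_val_one, cons_val_two, head_cons, tail_cons]
    ring
  have hchart : ∀ u, M *ᵥ u + c = ![a / 2 * (1 + u ⬝ᵥ (![-1, 1, 0] - y)),
      b / 2 * (1 + u ⬝ᵥ (![1, 1, 0] - y)), g * -u 1] := by
    intro u
    ext i
    fin_cases i <;> simp [M, c, dotProduct, Fin.sum_univ_three, vecHead, vecTail] <;> ring
  have hsum : ∀ u : Fin 3 → ℝ, a / 2 * (1 + u ⬝ᵥ (![-1, 1, 0] - y)) +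
      b / 2 * (1 + u ⬝ᵥ (![1, 1, 0] - y)) + g * -u 1 = 1 - y 2 * (1 + u ⬝ᵥ (![0, 0, 1] - y)) := by
    intro u
    simp only [ha, hb, hg, dotProduct, Fin.sum_univ_three, Pi.sub_apply, cons_val_zero,
      cons_val_one, cons_val_two, head_cons, tail_cons]
    ring
  have hQ : polarAt pyramidVertices y ∩ {u | u 1 ≤ 0} =
      (M *ᵥ ·) ⁻¹' ((· + c) ⁻¹' cornerSimplex 3) := by
    ext u
    rw [mem_preimage, mem_preimage, hchart, mem_polarAt_pyramidVertices_inter_nonpos,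
      vecCons_mem_cornerSimplex_three, hsum, sub_le_self_iff,
      mul_nonneg_iff_of_pos_left (half_pos h02), mul_nonneg_iff_of_pos_left (half_pos h02'),
      mul_nonneg_iff_of_pos_left h12, mul_nonneg_iff_of_pos_left h2]
  rw [hQ, volume_preimage_mulVec (by rw [hdet]; positivity), measure_preimage_add_right,
    volume_cornerSimplex, hdet, ← ENNReal.ofReal_mul (by positivity)]
  congr 1
  rw [abs_of_pos (by positivity), show ((Nat.factorial 3 : ℕ) : ℝ) = 6 by norm_num [Nat.factorial]]
  field_simp
  ring

theorem polarAt_pyramidVertices_inter_nonneg (y : Fin 3 → ℝ) :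
    polarAt pyramidVertices y ∩ {u | 0 ≤ u 1} =
      (diagonal ![1, -1, 1] *ᵥ ·) ⁻¹'
        (polarAt pyramidVertices (diagonal ![1, -1, 1] *ᵥ y) ∩ {u | u 1 ≤ 0}) := by
  ext u
  simp only [polarAt, pyramidVertices, mem_inter_iff, mem_preimage, mem_ofPred_eq,
    forall_mem_insert, mem_singleton_iff, forall_eq, mulVec_diagonal, dotProduct,
    Fin.sum_univ_three, Pi.sub_apply, cons_val_zero, cons_val_one, cons_val_two, head_cons,
    tail_cons]
  constructor <;> rintro ⟨⟨h₁, h₂, h₃, h₄, h₅⟩, h₆⟩ <;> refine ⟨⟨?_, ?_, ?_, ?_, ?_⟩, ?_⟩ <;>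
    linarith

theorem volume_polarAt_pyramidVertices {y : Fin 3 → ℝ} (h2 : 0 < y 2) (h02 : 0 < 1 - y 0 - y 2)
    (h02' : 0 < 1 + y 0 - y 2) (h12 : 0 < 1 - y 1 - y 2) (h12' : 0 < 1 + y 1 - y 2) :
    volume (polarAt pyramidVertices y) = ENNReal.ofReal
      (1 / (3 * (y 2 * (1 - y 0 - y 2) * (1 + y 0 - y 2) * (1 - y 1 - y 2))) +
        1 / (3 * (y 2 * (1 - y 0 - y 2) * (1 + y 0 - y 2) * (1 + y 1 - y 2)))) := by
  set Q := polarAt pyramidVertices y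
  have hsplit : Q = Q ∩ {u | u 1 ≤ 0} ∪ Q ∩ {u | 0 ≤ u 1} := by
    rw [← inter_union_distrib_left, ← ofPred_or]
    simp [le_total]
  have hmeas : MeasurableSet (Q ∩ {u | 0 ≤ u 1}) :=
    ((isClosed_polarAt _ _).inter
      (isClosed_le continuous_const (continuous_apply 1))).measurableSet
  have hnull : volume (Q ∩ {u | u 1 ≤ 0} ∩ (Q ∩ {u | 0 ≤ u 1})) = 0 := by
    refine measure_mono_null (t := {u | u 1 = 0}) ?_ ?_
    · rintro u ⟨⟨-, hle⟩, -, hge⟩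
      exact le_antisymm hle hge
    · rw [volume_pi]
      exact Measure.pi_hyperplane _ 1 0
  have hdet : (diagonal ![(1 : ℝ), -1, 1]).det = -1 := by simp [det_diagonal, Fin.prod_univ_three]
  have hreflect : diagonal ![(1 : ℝ), -1, 1] *ᵥ y = ![y 0, -y 1, y 2] := by
    ext i
    fin_cases i <;> simp [mulVec_diagonal]
  have hmirror := volume_polarAt_pyramidVertices_inter_nonpos (y := ![y 0, -y 1, y 2])
    h2 h02 h02' (by simpa [sub_neg_eq_add] using h12')
  simp only [cons_val_zero, cons_val_one, cons_val_two, head_cons, tail_cons, sub_neg_eq_add]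
    at hmirror
  rw [hsplit, measure_union₀ hmeas.nullMeasurableSet hnull,
    volume_polarAt_pyramidVertices_inter_nonpos h2 h02 h02' h12,
    polarAt_pyramidVertices_inter_nonneg, volume_preimage_mulVec (by rw [hdet]; norm_num), hdet,
    hreflect, hmirror, inv_neg, inv_one, abs_neg, abs_one, ENNReal.ofReal_one, one_mul,
    ← ENNReal.ofReal_add (by positivity) (by positivity)]

/-- Triangulation property for the pyramid P with vertices (0,0,1), (±1,±1,0), subdivided
into the two tetrahedra Δ₁ = conv{(0,0,1),(1,1,0),(-1,1,0),(-1,-1,0)} and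
Δ₂ = conv{(0,0,1),(1,1,0),(-1,-1,0),(1,-1,0)}: for y in the interior of P (away from the
internal wall y₁ = y₂, where the spurious poles of the two summands cancel), the normalized
dual volume vol((P-y)°) equals the sum of the rational functions given by the vertex-sum
(canonical form) formula for Δ₁ and Δ₂, i.e. the meromorphic continuations of
vol((Δ₁-y)°) and vol((Δ₂-y)°). -/
theorem stmt_14 (y : Fin 3 → ℝ)
    (P : Set (Fin 3 → ℝ))
    (hP : P = convexHull ℝ
      ({![0,0,1], ![1,1,0], ![-1,1,0], ![-1,-1,0], ![1,-1,0]} : Set (Fin 3 → ℝ)))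
    (hy : y ∈ interior P) (hwall : y 0 ≠ y 1) :
    ((Nat.factorial 3 : ℝ)) *
        (volume {u : Fin 3 → ℝ | ∀ p ∈ P, -1 ≤ u ⬝ᵥ (p - y)}).toReal
      = 2 / (y 2 * (y 0 - y 2 + 1) * (y 1 - y 0) * (1 - y 1 - y 2))
      + 2 / (y 2 * (y 1 - y 2 + 1) * (1 - y 0 - y 2) * (y 0 - y 1)) := by
  obtain rfl : P = convexHull ℝ pyramidVertices := hP
  obtain ⟨h2, h02, h02', h12, h12'⟩ := pyramid_facets_pos_of_mem_interior hy
  have hvol := volume_polarAt_pyramidVertices h2 h02 h02' h12 h12'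
  rw [← polarAt_convexHull, polarAt] at hvol
  rw [hvol, ENNReal.toReal_ofReal (by positivity)]
  have h01 : y 0 - y 1 ≠ 0 := sub_ne_zero.2 hwall
  have h10 : y 1 - y 0 ≠ 0 := sub_ne_zero.2 hwall.symm
  rw [show y 0 - y 2 + 1 = 1 + y 0 - y 2 by ring, show y 1 - y 2 + 1 = 1 + y 1 - y 2 by ring,
    show ((Nat.factorial 3 : ℕ) : ℝ) = 6 by norm_num [Nat.factorial]]
  field_simp
  ring
end
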